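/- arXiv:1701.07007 — 2 statements merged into one kernel-verified Lean document; each statement's English description precedes it below -/
import Mathlib

section
/- Let X be a finite random variable with distribution p_X, randomly and independently binned via uniform random maps B₁ : 𝒳 → [1,M̃] and B₂ : 𝒳 → [1,C̃] (each B₁(x), B₂(x) uniform and independent across x). Let P_{MC} denote the induced (random) joint distribution of M = B₁(X), C = B₂(X). For γ > 0 let D_γ = {x : log₂(1/p_X(x)) > γ}. Then E_B[ 𝕍(P_{MC}, p_M^U × p_C^U) ] ≤ P(X ∉ D_γ) + (1/2)·√(M̃·C̃·2^{−γ}), where 𝕍 is total variation distance and p_M^U, p_C^U are uniform distributions. -/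
/-!
Both maps together are one uniform random map `B : 𝒳 → Fin M̃ × Fin C̃`, so fix a cell `t` and
look at its mass `P(t) = ∑ₓ p(x) 1[B x = t]`, whose mean is `1 / (M̃ C̃)`. Split the sum at `D_γ`.
The indicators are pairwise independent, so the part over `D_γ` has variance at most
`∑_{D_γ} p(x)² / (M̃ C̃) ≤ 2^{-γ} / (M̃ C̃)`, and by Cauchy–Schwarz its mean absolute deviation is
at most the square root of that. The part off `D_γ` is nonnegative with mean
`P(X ∉ D_γ) / (M̃ C̃)`, so it deviates by at most twice that on average. Summing over the `M̃ C̃`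
cells gives the bound.
-/

open Finset
open scoped BigOperators

section Expect
variable {ι : Type*} {s : Finset ι}

lemma Finset.expect_sub_expect_sq (hs : s.Nonempty) (f : ι → ℝ) :
    𝔼 i ∈ s, (f i - 𝔼 j ∈ s, f j) ^ 2 = 𝔼 i ∈ s, f i ^ 2 - (𝔼 i ∈ s, f i) ^ 2 := by
  simp only [sub_sq, expect_add_distrib, expect_sub_distrib, expect_const hs, ← expect_mul,
    ← mul_expect]
  ring

lemma Finset.expect_abs_le_sqrt_expect_sq (f : ι → ℝ) :
    𝔼 i ∈ s, |f i| ≤ √(𝔼 i ∈ s, f i ^ 2) := by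
  rcases s.eq_empty_or_nonempty with rfl | hs
  · simp
  refine Real.le_sqrt_of_sq_le ?_
  simpa [expect_const hs] using expect_mul_sq_le_sq_mul_sq s (fun i ↦ |f i|) (fun _ ↦ 1)

lemma Fintype.expect_ite_eq_div_card {β : Type*} [Fintype β] [DecidableEq β] (t : β) (a : ℝ) :
    𝔼 v : β, (if v = t then a else 0) = a / Fintype.card β := by
  rw [Fintype.expect_eq_sum_div_card, Fintype.sum_ite_eq']

end Expect

section RandomFunction
variable {α β M : Type*} [Fintype α] [DecidableEq α] [Fintype β] [Nonempty β]
  [AddCommMonoid M] [Module ℚ≥0 M]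

lemma expect_comp_eval (x : α) (f : β → M) : 𝔼 g : α → β, f (g x) = 𝔼 v, f v := by
  rw [Fintype.expect_equiv (Equiv.funSplitAt x β) (fun g ↦ f (g x)) (fun q ↦ f q.1)
    fun g ↦ rfl, ← univ_product_univ, expect_product]
  simp

lemma expect_comp_eval_eval {x y : α} (hxy : x ≠ y) (f : β → β → M) :
    𝔼 g : α → β, f (g x) (g y) = 𝔼 v, 𝔼 w, f v w := by
  rw [Fintype.expect_equiv (Equiv.funSplitAt x β) (fun g ↦ f (g x) (g y))
    (fun q ↦ f q.1 (q.2 ⟨y, hxy.symm⟩)) fun g ↦ by simp [Equiv.funSplitAt, Equiv.piSplitAt],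
    ← univ_product_univ, expect_product]
  simp [expect_comp_eval (⟨y, hxy.symm⟩ : {j // j ≠ x})]

end RandomFunction

section Binning
variable {α β : Type*} [Fintype α] [DecidableEq α] [Fintype β] [DecidableEq β] [Nonempty β]

lemma expect_ite_eval_eq (x : α) (t : β) (a : ℝ) :
    𝔼 g : α → β, (if g x = t then a else 0) = a / Fintype.card β :=
  (expect_comp_eval x _).trans (Fintype.expect_ite_eq_div_card t a)

lemma expect_ite_eval_eq_mul_ite_eval_eq (x y : α) (t : β) (a b : ℝ) :
    𝔼 g : α → β, (if g x = t then a else 0) * (if g y = t then b else 0) =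
      if x = y then a * b / Fintype.card β else a * b / Fintype.card β ^ 2 := by
  split_ifs with hxy
  · subst hxy
    simpa only [ite_zero_mul_ite_zero, and_self] using expect_ite_eval_eq x t (a * b)
  · rw [expect_comp_eval_eval hxy fun v w ↦ (if v = t then a else 0) * (if w = t then b else 0)]
    rw [← Fintype.expect_mul_expect, Fintype.expect_ite_eq_div_card,
      Fintype.expect_ite_eq_div_card]
    ring

/-- The mass that the weights `w` on `S` put into bin `t` under the binning `g`; with `S = univ`
this is the paper's `P_{MC}(t)`. -/
def binMass (w : α → ℝ) (S : Finset α) (g : α → β) (t : β) : ℝ :=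
  ∑ x ∈ S, if g x = t then w x else 0

lemma expect_binMass (w : α → ℝ) (S : Finset α) (t : β) :
    𝔼 g, binMass w S g t = (∑ x ∈ S, w x) / Fintype.card β := by
  simp only [binMass, expect_sum_comm, expect_ite_eval_eq, sum_div]

lemma expect_binMass_sq (w : α → ℝ) (S : Finset α) (t : β) :
    𝔼 g, binMass w S g t ^ 2 = (∑ x ∈ S, w x) ^ 2 / Fintype.card β ^ 2 +
      (1 / Fintype.card β - 1 / Fintype.card β ^ 2) * ∑ x ∈ S, w x ^ 2 := by
  set n : ℝ := (Fintype.card β : ℝ)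
  have pair (x y : α) :
      𝔼 g : α → β, (if g x = t then w x else 0) * (if g y = t then w y else 0) =
        w x * w y / n ^ 2 + if x = y then (1 / n - 1 / n ^ 2) * w x ^ 2 else 0 := by
    rw [expect_ite_eval_eq_mul_ite_eval_eq]
    split_ifs with h
    · subst h; ring
    · ring
  calc 𝔼 g, binMass w S g t ^ 2
      = ∑ x ∈ S, ∑ y ∈ S,
          𝔼 g : α → β, (if g x = t then w x else 0) * (if g y = t then w y else 0) := by
        simp only [binMass, sq, sum_mul_sum, expect_sum_comm]
    _ = (∑ x ∈ S, w x) ^ 2 / n ^ 2 + (1 / n - 1 / n ^ 2) * ∑ x ∈ S, w x ^ 2 := by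
        simp only [pair, sum_add_distrib, sum_ite_eq, sum_ite_mem, inter_self, ← sum_div,
          ← mul_sum, sq, sum_mul_sum]

lemma expect_sq_binMass_sub_le (w : α → ℝ) (S : Finset α) (t : β) :
    𝔼 g, (binMass w S g t - (∑ x ∈ S, w x) / Fintype.card β) ^ 2 ≤
      (∑ x ∈ S, w x ^ 2) / Fintype.card β := by
  rw [← expect_binMass, expect_sub_expect_sq univ_nonempty, expect_binMass_sq, expect_binMass]
  have : 0 ≤ (∑ x ∈ S, w x ^ 2) / Fintype.card β ^ 2 := by positivity
  linear_combination this

lemma expect_abs_binMass_sub_le {w : α → ℝ} (hw : ∀ x, 0 ≤ w x) (S : Finset α) (t : β) :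
    𝔼 g, |binMass w univ g t - (∑ x, w x) / Fintype.card β| ≤
      √((∑ x ∈ S, w x ^ 2) / Fintype.card β) +
        2 * (∑ x ∈ Sᶜ, w x) / Fintype.card β := by
  have hμ : 0 ≤ (∑ x ∈ Sᶜ, w x) / Fintype.card β :=
    div_nonneg (sum_nonneg fun x _ ↦ hw x) (Nat.cast_nonneg _)
  have pointwise (g : α → β) : |binMass w univ g t - (∑ x, w x) / Fintype.card β| ≤
      |binMass w S g t - (∑ x ∈ S, w x) / Fintype.card β| +
        (binMass w Sᶜ g t + (∑ x ∈ Sᶜ, w x) / Fintype.card β) := by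
    have hX : 0 ≤ binMass w Sᶜ g t := sum_nonneg fun x _ ↦ by split_ifs <;> simp [hw x]
    have hsplit : binMass w univ g t - (∑ x, w x) / Fintype.card β =
        (binMass w S g t - (∑ x ∈ S, w x) / Fintype.card β) +
          (binMass w Sᶜ g t - (∑ x ∈ Sᶜ, w x) / Fintype.card β) := by
      rw [binMass, ← sum_add_sum_compl S, ← sum_add_sum_compl S w, add_div, binMass, binMass]
      ring
    rw [hsplit]
    exact (abs_add_le _ _).trans (by gcongr; exact abs_sub_le_iff.2 ⟨by linarith, by linarith⟩)
  have deviation : 𝔼 g, |binMass w S g t - (∑ x ∈ S, w x) / Fintype.card β| ≤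
      √((∑ x ∈ S, w x ^ 2) / Fintype.card β) :=
    (expect_abs_le_sqrt_expect_sq _).trans (Real.sqrt_le_sqrt (expect_sq_binMass_sub_le w S t))
  have tail : 𝔼 g : α → β, (binMass w Sᶜ g t + (∑ x ∈ Sᶜ, w x) / Fintype.card β) =
      2 * (∑ x ∈ Sᶜ, w x) / Fintype.card β := by
    rw [expect_add_distrib, expect_binMass, Fintype.expect_const]
    ring
  calc 𝔼 g, |binMass w univ g t - (∑ x, w x) / Fintype.card β|
      ≤ 𝔼 g, (|binMass w S g t - (∑ x ∈ S, w x) / Fintype.card β| +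
          (binMass w Sᶜ g t + (∑ x ∈ Sᶜ, w x) / Fintype.card β)) :=
        expect_le_expect fun g _ ↦ pointwise g
    _ ≤ √((∑ x ∈ S, w x ^ 2) / Fintype.card β) +
          2 * (∑ x ∈ Sᶜ, w x) / Fintype.card β := by
        rw [expect_add_distrib, tail]
        gcongr

lemma expect_tvDist_binMass_le {w : α → ℝ} (hw : ∀ x, 0 ≤ w x) (S : Finset α) :
    𝔼 g : α → β, 1 / 2 * ∑ t, |binMass w univ g t - (∑ x, w x) / Fintype.card β| ≤
      ∑ x ∈ Sᶜ, w x + 1 / 2 * √(Fintype.card β * ∑ x ∈ S, w x ^ 2) := by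
  set n : ℝ := (Fintype.card β : ℝ)
  have hn : 0 < n := by positivity
  have sqrt_eq : √(n * ∑ x ∈ S, w x ^ 2) = n * √((∑ x ∈ S, w x ^ 2) / n) := by
    rw [show n * ∑ x ∈ S, w x ^ 2 = n ^ 2 * ((∑ x ∈ S, w x ^ 2) / n) by field_simp,
      Real.sqrt_mul (sq_nonneg n), Real.sqrt_sq hn.le]
  calc 𝔼 g : α → β, 1 / 2 * ∑ t, |binMass w univ g t - (∑ x, w x) / n|
      = 1 / 2 * ∑ t, 𝔼 g : α → β, |binMass w univ g t - (∑ x, w x) / n| := by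
        rw [← mul_expect, expect_sum_comm]
    _ ≤ 1 / 2 * ∑ _t : β, (√((∑ x ∈ S, w x ^ 2) / n) +
          2 * (∑ x ∈ Sᶜ, w x) / n) := by
        gcongr with t
        exact expect_abs_binMass_sub_le hw S t
    _ = ∑ x ∈ Sᶜ, w x + 1 / 2 * √(n * ∑ x ∈ S, w x ^ 2) := by
        rw [sum_const, card_univ, nsmul_eq_mul, sqrt_eq]
        field_simp
        ring

end Binning

lemma sum_sq_le_mul_sum_of_le {α : Type*} {S : Finset α} {w : α → ℝ} {ε : ℝ}
    (hw : ∀ x ∈ S, 0 ≤ w x) (hle : ∀ x ∈ S, w x ≤ ε) :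
    ∑ x ∈ S, w x ^ 2 ≤ ε * ∑ x ∈ S, w x := by
  rw [mul_sum]
  exact sum_le_sum fun x hx ↦ by
    rw [sq]
    exact mul_le_mul_of_nonneg_right (hle x hx) (hw x hx)

lemma le_rpow_neg_of_lt_logb_one_div {b p γ : ℝ} (hb : 1 < b) (hp : 0 ≤ p)
    (h : γ < Real.logb b (1 / p)) : p ≤ b ^ (-γ) := by
  rcases hp.eq_or_lt with rfl | hp
  · positivity
  rw [one_div, Real.logb_inv, lt_neg] at h
  exact ((Real.logb_lt_iff_lt_rpow hb hp).1 h).le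

theorem one_shot_binning_tv_general {𝒳 : Type*} [Fintype 𝒳] [DecidableEq 𝒳]
    (Mt Ct : ℕ) (hM : 0 < Mt) (hC : 0 < Ct)
    (p : 𝒳 → ℝ) (hp : ∀ x, 0 ≤ p x) (hsum : ∑ x, p x = 1)
    (γ : ℝ) :
    (1 / (Fintype.card ((𝒳 → Fin Mt) × (𝒳 → Fin Ct)) : ℝ)) *
      ∑ b : (𝒳 → Fin Mt) × (𝒳 → Fin Ct),
        ((1/2) * ∑ m : Fin Mt, ∑ c : Fin Ct,
          |(∑ x, p x * (if b.1 x = m then (1:ℝ) else 0) * (if b.2 x = c then (1:ℝ) else 0))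
            - 1 / ((Mt : ℝ) * Ct)|)
    ≤ (∑ x ∈ Finset.univ.filter (fun x => ¬ (γ < Real.logb 2 (1 / p x))), p x)
      + (1/2) * Real.sqrt ((Mt : ℝ) * Ct * (2:ℝ) ^ (-γ)) := by
  have : NeZero Mt := ⟨hM.ne'⟩
  have : NeZero Ct := ⟨hC.ne'⟩
  set D := univ.filter fun x ↦ γ < Real.logb 2 (1 / p x)
  have hD : ∑ x ∈ D, p x ^ 2 ≤ 2 ^ (-γ) :=
    calc ∑ x ∈ D, p x ^ 2 ≤ 2 ^ (-γ) * ∑ x ∈ D, p x :=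
          sum_sq_le_mul_sum_of_le (fun x _ ↦ hp x) fun x hx ↦
            le_rpow_neg_of_lt_logb_one_div one_lt_two (hp x) (mem_filter.1 hx).2
      _ ≤ 2 ^ (-γ) * 1 := by
          rw [← hsum]
          exact mul_le_mul_of_nonneg_left (sum_le_univ_sum_of_nonneg hp) (by positivity)
      _ = 2 ^ (-γ) := mul_one _
  have key := expect_tvDist_binMass_le (β := Fin Mt × Fin Ct) hp D
  rw [compl_filter, hsum, Fintype.card_prod, Fintype.card_fin, Fintype.card_fin] at key
  calc _ = 𝔼 g : 𝒳 → Fin Mt × Fin Ct,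
        1 / 2 * ∑ t, |binMass p univ g t - 1 / ↑(Mt * Ct)| := by
        rw [one_div_mul_eq_div, ← Fintype.expect_eq_sum_div_card]
        refine Fintype.expect_equiv (Equiv.arrowProdEquivProdArrow _ _ _).symm _ _ fun b ↦ ?_
        have cell (x : 𝒳) (m : Fin Mt) (c : Fin Ct) :
            p x * (if b.1 x = m then 1 else 0) * (if b.2 x = c then 1 else 0) =
              if (b.1 x, b.2 x) = (m, c) then p x else 0 := by
          by_cases h₁ : b.1 x = m <;> by_cases h₂ : b.2 x = c <;> simp [h₁, h₂]
        simp only [cell, binMass, Equiv.arrowProdEquivProdArrow, Fintype.sum_prod_type,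
          Equiv.coe_fn_symm_mk, Nat.cast_mul]
        rfl
    _ ≤ _ := key
    _ ≤ _ := by push_cast; gcongr

/-- One-shot binning lemma: the expected (over uniform independent random binning)
total variation distance between the induced bin-index distribution `P_MC` and the
product of uniform distributions is at most
`P(X ∉ D_γ) + (1/2) √(M̃ C̃ 2^{-γ})`, where `D_γ = {x : log₂(1/p_X(x)) > γ}`. -/
theorem one_shot_binning_tv {𝒳 : Type*} [Fintype 𝒳] [DecidableEq 𝒳]
    (Mt Ct : ℕ) (hM : 0 < Mt) (hC : 0 < Ct)
    (p : 𝒳 → ℝ) (hp : ∀ x, 0 ≤ p x) (hsum : ∑ x, p x = 1)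
    (γ : ℝ) (hγ : 0 < γ) :
    (1 / (Fintype.card ((𝒳 → Fin Mt) × (𝒳 → Fin Ct)) : ℝ)) *
      ∑ b : (𝒳 → Fin Mt) × (𝒳 → Fin Ct),
        ((1/2) * ∑ m : Fin Mt, ∑ c : Fin Ct,
          |(∑ x, p x * (if b.1 x = m then (1:ℝ) else 0) * (if b.2 x = c then (1:ℝ) else 0))
            - 1 / ((Mt : ℝ) * Ct)|)
    ≤ (∑ x ∈ Finset.univ.filter (fun x => ¬ (γ < Real.logb 2 (1 / p x))), p x)
      + (1/2) * Real.sqrt ((Mt : ℝ) * Ct * (2:ℝ) ^ (-γ)) :=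
  one_shot_binning_tv_general Mt Ct hM hC p hp hsum γ
end

section
/- Let U − X − (V,Z) be a Markov chain of finite random variables, where additionally V − X − Z is a Markov chain (V and Z conditionally independent given X), and let Φ be a function of Z taking values in {0,1} such that Φ is independent of X, p_{Φ|X,U,V} = p_Φ. If conditioned on Φ = 0 we have Z = X, and conditioned on Φ = 1, Z is a constant symbol '?', and P(Φ=0) = α, then I(U;Z|V) = α·I(U;X|V). -/
open Finset

/-- Shannon entropy of a distribution on a finite type (natural logarithm base). -/
noncomputable def ent {α : Type*} [Fintype α] (q : α → ℝ) : ℝ :=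
  - ∑ a, q a * Real.log (q a)

private lemma mul_log_mul (c t : ℝ) :
    (c * t) * Real.log (c * t) = c * (t * Real.log t) + c * t * Real.log c := by
  rcases eq_or_ne c 0 with hc | hc
  · simp [hc]
  rcases eq_or_ne t 0 with ht | ht
  · simp [ht]
  rw [Real.log_mul hc ht]; ring

private lemma sum_scale_log {β : Type*} [Fintype β] (c : ℝ) (f : β → ℝ) :
    ∑ b, (c * f b) * Real.log (c * f b)
      = c * (∑ b, f b * Real.log (f b)) + c * (∑ b, f b) * Real.log c := by
  rw [Finset.sum_congr rfl fun b _ => mul_log_mul c (f b), Finset.sum_add_distrib,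
    ← Finset.mul_sum]
  congr 1
  rw [← Finset.sum_mul, ← Finset.mul_sum, mul_assoc]

/-- Erasure channel lemma: let `(U,X,V) ∼ q` and let `Z` be obtained from `X` through
an erasure channel, independent of everything else: with probability `α` (the event
`Φ = 0`), `Z = X` (`Z = some x`), and with probability `1−α` (the event `Φ = 1`),
`Z = ?` (`Z = none`). Then `I(U;Z|V) = α · I(U;X|V)`. The joint distribution `p` of
`(U,X,V,Z)` is given by `p(u,x,v,some x') = α q(u,x,v) 𝟙{x'=x}` and
`p(u,x,v,none) = (1−α) q(u,x,v)`; this encodes `Φ` being a function of `Z`,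
independent of `(X,U,V)`, with `P(Φ=0) = α`, so that in particular the Markov chains
`U − X − (V,Z)` and `V − X − Z` hold. -/
theorem erasure_condMutualInfo {U X V : Type*}
    [Fintype U] [Fintype X] [Fintype V] [DecidableEq X]
    (q : U × X × V → ℝ) (hq : ∀ a, 0 ≤ q a) (hqsum : ∑ a, q a = 1)
    (α : ℝ) (hα : α ∈ Set.Icc (0:ℝ) 1)
    (p : U × X × V × Option X → ℝ)
    (hpnone : ∀ u x v, p (u, x, v, none) = (1 - α) * q (u, x, v))
    (hpsome : ∀ u x v x', p (u, x, v, some x') =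
      α * q (u, x, v) * (if x' = x then (1:ℝ) else 0)) :
    -- I(U;Z|V) = H(U,V) + H(Z,V) − H(U,Z,V) − H(V), computed from p
    (ent (fun a : U × V => ∑ x, ∑ z, p (a.1, x, a.2, z))
      + ent (fun a : Option X × V => ∑ u, ∑ x, p (u, x, a.2, a.1))
      - ent (fun a : U × Option X × V => ∑ x, p (a.1, x, a.2.2, a.2.1))
      - ent (fun v : V => ∑ u, ∑ x, ∑ z, p (u, x, v, z)))
    = α * -- I(U;X|V) = H(U,V) + H(X,V) − H(U,X,V) − H(V), computed from q
      (ent (fun a : U × V => ∑ x, q (a.1, x, a.2))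
        + ent (fun a : X × V => ∑ u, q (u, a.1, a.2))
        - ent (fun a : U × X × V => q (a.1, a.2.1, a.2.2))
        - ent (fun v : V => ∑ u, ∑ x, q (u, x, v))) := by
  -- total-mass facts
  have htot : ∑ u, ∑ x, ∑ v, q (u, x, v) = 1 := by
    rw [← hqsum]; simp [Fintype.sum_prod_type]
  have hqUV1 : ∑ a : U × V, (∑ x, q (a.1, x, a.2)) = 1 := by
    rw [Fintype.sum_prod_type, ← htot]
    exact Finset.sum_congr rfl fun u _ => Finset.sum_comm
  have hqXV1 : ∑ a : X × V, (∑ u, q (u, a.1, a.2)) = 1 := by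
    rw [Fintype.sum_prod_type, ← htot]
    calc ∑ x : X, ∑ v : V, ∑ u : U, q (u, x, v)
        = ∑ x : X, ∑ u : U, ∑ v : V, q (u, x, v) :=
          Finset.sum_congr rfl fun x _ => Finset.sum_comm
      _ = ∑ u : U, ∑ x : X, ∑ v : V, q (u, x, v) := Finset.sum_comm
  have hqV1 : ∑ v : V, (∑ u, ∑ x, q (u, x, v)) = 1 := by
    rw [← htot]
    calc ∑ v : V, ∑ u : U, ∑ x : X, q (u, x, v)
        = ∑ u : U, ∑ v : V, ∑ x : X, q (u, x, v) := Finset.sum_comm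
      _ = ∑ u : U, ∑ x : X, ∑ v : V, q (u, x, v) :=
          Finset.sum_congr rfl fun u _ => Finset.sum_comm
  have hqUXV1 : ∑ a : U × X × V, q (a.1, a.2.1, a.2.2) = 1 := by
    rw [← hqsum]
  -- marginals of p
  have hsz : ∀ u x v, ∑ z, p (u, x, v, z) = q (u, x, v) := by
    intro u x v
    rw [Fintype.sum_option]
    simp only [hpnone, hpsome, mul_ite, mul_one, mul_zero, Finset.sum_ite_eq',
      Finset.mem_univ, if_true]
    ring
  have gnone : ∀ v, ∑ u, ∑ x, p (u, x, v, none)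
      = (1 - α) * (∑ u, ∑ x, q (u, x, v)) := by
    intro v; simp only [hpnone, ← Finset.mul_sum]
  have gsome : ∀ (x' : X) v, ∑ u, ∑ x, p (u, x, v, some x')
      = α * (∑ u, q (u, x', v)) := by
    intro x' v
    simp only [hpsome, mul_ite, mul_one, mul_zero, Finset.sum_ite_eq, Finset.sum_ite_eq',
      Finset.mem_univ, if_true, ← Finset.mul_sum]
  have gnone' : ∀ u v, ∑ x, p (u, x, v, none) = (1 - α) * (∑ x, q (u, x, v)) := by
    intro u v; simp only [hpnone, ← Finset.mul_sum]
  have gsome' : ∀ u (x' : X) v, ∑ x, p (u, x, v, some x') = α * q (u, x', v) := by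
    intro u x' v
    simp only [hpsome, mul_ite, mul_one, mul_zero, Finset.sum_ite_eq, Finset.sum_ite_eq',
      Finset.mem_univ, if_true]
  -- the four raw entropy sums computed from p
  have h1 : ∑ a : U × V, (∑ x, ∑ z, p (a.1, x, a.2, z))
        * Real.log (∑ x, ∑ z, p (a.1, x, a.2, z))
      = ∑ a : U × V, (∑ x, q (a.1, x, a.2)) * Real.log (∑ x, q (a.1, x, a.2)) := by
    refine Finset.sum_congr rfl fun a _ => ?_
    rw [Finset.sum_congr rfl fun x _ => hsz a.1 x a.2]
  have h4 : ∑ v : V, (∑ u, ∑ x, ∑ z, p (u, x, v, z))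
        * Real.log (∑ u, ∑ x, ∑ z, p (u, x, v, z))
      = ∑ v : V, (∑ u, ∑ x, q (u, x, v)) * Real.log (∑ u, ∑ x, q (u, x, v)) := by
    refine Finset.sum_congr rfl fun v _ => ?_
    rw [Finset.sum_congr rfl fun u _ =>
      Finset.sum_congr rfl fun x _ => hsz u x v]
  have h2 : ∑ a : Option X × V, (∑ u, ∑ x, p (u, x, a.2, a.1))
        * Real.log (∑ u, ∑ x, p (u, x, a.2, a.1))
      = (1 - α) * (∑ v : V, (∑ u, ∑ x, q (u, x, v)) * Real.log (∑ u, ∑ x, q (u, x, v)))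
        + α * (∑ a : X × V, (∑ u, q (u, a.1, a.2)) * Real.log (∑ u, q (u, a.1, a.2)))
        + (1 - α) * Real.log (1 - α) + α * Real.log α := by
    rw [Fintype.sum_prod_type, Fintype.sum_option]
    have e1 : ∑ v, (∑ u, ∑ x, p (u, x, v, none)) * Real.log (∑ u, ∑ x, p (u, x, v, none))
        = (1 - α) * (∑ v, (∑ u, ∑ x, q (u, x, v)) * Real.log (∑ u, ∑ x, q (u, x, v)))
          + (1 - α) * Real.log (1 - α) := by
      simp only [gnone]
      rw [sum_scale_log, hqV1]; ring
    have e2 : ∑ x' : X, ∑ v, (∑ u, ∑ x, p (u, x, v, some x'))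
          * Real.log (∑ u, ∑ x, p (u, x, v, some x'))
        = α * (∑ a : X × V, (∑ u, q (u, a.1, a.2)) * Real.log (∑ u, q (u, a.1, a.2)))
          + α * Real.log α := by
      simp only [gsome]
      rw [← Fintype.sum_prod_type
        (f := fun a : X × V => (α * ∑ u, q (u, a.1, a.2))
          * Real.log (α * ∑ u, q (u, a.1, a.2)))]
      rw [sum_scale_log, hqXV1]; ring
    rw [e1, e2]; ring
  have h3 : ∑ a : U × Option X × V, (∑ x, p (a.1, x, a.2.2, a.2.1))
        * Real.log (∑ x, p (a.1, x, a.2.2, a.2.1))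
      = (1 - α) * (∑ a : U × V, (∑ x, q (a.1, x, a.2)) * Real.log (∑ x, q (a.1, x, a.2)))
        + α * (∑ a : U × X × V, q (a.1, a.2.1, a.2.2) * Real.log (q (a.1, a.2.1, a.2.2)))
        + (1 - α) * Real.log (1 - α) + α * Real.log α := by
    rw [Fintype.sum_prod_type]
    have inner : ∀ u : U, ∑ b : Option X × V, (∑ x, p (u, x, b.2, b.1))
          * Real.log (∑ x, p (u, x, b.2, b.1))
        = (∑ v, ((1 - α) * (∑ x, q (u, x, v)))
            * Real.log ((1 - α) * (∑ x, q (u, x, v))))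
          + ∑ x' : X, ∑ v, (α * q (u, x', v)) * Real.log (α * q (u, x', v)) := by
      intro u
      rw [Fintype.sum_prod_type, Fintype.sum_option]
      simp only [gnone', gsome']
    rw [Finset.sum_congr rfl fun u _ => inner u, Finset.sum_add_distrib]
    have e1 : ∑ u, ∑ v, ((1 - α) * (∑ x, q (u, x, v)))
          * Real.log ((1 - α) * (∑ x, q (u, x, v)))
        = (1 - α) * (∑ a : U × V, (∑ x, q (a.1, x, a.2)) * Real.log (∑ x, q (a.1, x, a.2)))
          + (1 - α) * Real.log (1 - α) := by
      rw [← Fintype.sum_prod_type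
        (f := fun a : U × V => ((1 - α) * (∑ x, q (a.1, x, a.2)))
          * Real.log ((1 - α) * (∑ x, q (a.1, x, a.2))))]
      rw [sum_scale_log, hqUV1]; ring
    have e2 : ∑ u, ∑ x' : X, ∑ v, (α * q (u, x', v)) * Real.log (α * q (u, x', v))
        = α * (∑ a : U × X × V, q (a.1, a.2.1, a.2.2) * Real.log (q (a.1, a.2.1, a.2.2)))
          + α * Real.log α := by
      rw [Finset.sum_congr rfl fun u _ =>
        (Fintype.sum_prod_type (f := fun b : X × V => (α * q (u, b.1, b.2))
          * Real.log (α * q (u, b.1, b.2)))).symm]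
      rw [← Fintype.sum_prod_type
        (f := fun a : U × X × V => (α * q (a.1, a.2.1, a.2.2))
          * Real.log (α * q (a.1, a.2.1, a.2.2)))]
      rw [sum_scale_log, hqUXV1]; ring
    rw [e1, e2]; ring
  simp only [ent]
  rw [h1, h2, h3, h4]; ring
end
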